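/- (Corollary 1, precise form.) Let x̂ ∈ ℝⁿ and let G ⊆ X ⊆ ℝⁿ. Then G is a forward-feasible generator set, i.e., C(x̂, G) = C(x̂, X), if and only if every forward-feasible point lies in the closed cone generated by G from x̂: for all x ∈ X, x − x̂ ∈ closure (cone({g − x̂ : g ∈ G})). -/

import Mathlib

/-!
`C(x̂, S)` is the inner dual cone of the translate `S - x̂`. By the bipolar theorem, the dual of
`s` is contained in the dual of `t` exactly when `t` lies in the closed conic hull of `s`.
Since `G ⊆ X`, the inclusion `C(x̂, X) ⊆ C(x̂, G)` is automatic, and the reverse one is the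
cone condition.
-/

/-- The inverse-feasible region `C(x̂, S)`: the set of cost vectors `c` for which `x̂`
minimizes `⟪c, ·⟫` over `S`. -/
def invFeas {n : ℕ} (xh : EuclideanSpace ℝ (Fin n)) (S : Set (EuclideanSpace ℝ (Fin n))) :
    Set (EuclideanSpace ℝ (Fin n)) :=
  {c | ∀ x ∈ S, (inner ℝ c xh : ℝ) ≤ inner ℝ c x}


/-- The pointed conic hull of `S`: all finite nonnegative linear combinations of
elements of `S`, i.e. the `ℝ≥0`-submodule spanned by `S`. -/
def cone {n : ℕ} (S : Set (EuclideanSpace ℝ (Fin n))) : Set (EuclideanSpace ℝ (Fin n)) :=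
  (Submodule.span {c : ℝ // 0 ≤ c} S : Submodule {c : ℝ // 0 ≤ c} (EuclideanSpace ℝ (Fin n)))

open scoped RealInnerProductSpace

namespace ProperCone

variable {E : Type*} [NormedAddCommGroup E] [InnerProductSpace ℝ E] [CompleteSpace E]

lemma innerDual_closure_hull (s : Set E) :
    innerDual (closure (PointedCone.hull ℝ s : Set E)) = innerDual s := by
  refine le_antisymm (innerDual_le_innerDual (subset_closure.trans' Submodule.subset_span))
    fun y hy x hx ↦ ?_
  have hull_le : PointedCone.hull ℝ s ≤ (innerDual {y}).toSubmodule :=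
    Submodule.span_le.2 fun z hz ↦ by simpa [real_inner_comm] using hy hz
  simpa [real_inner_comm] using closure_minimal hull_le (innerDual {y}).isClosed hx

lemma innerDual_le_innerDual_iff {s t : Set E} :
    innerDual s ≤ innerDual t ↔ t ⊆ closure (PointedCone.hull ℝ s) := by
  refine ⟨fun h ↦ ?_, fun h ↦ ?_⟩
  · calc t ⊆ innerDual (innerDual t : Set E) := fun x hx y hy ↦ by
          simpa [real_inner_comm] using hy hx
      _ ⊆ innerDual (innerDual s : Set E) := innerDual_le_innerDual h
      _ = closure (PointedCone.hull ℝ s) := by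
          rw [← innerDual_closure_hull s]
          exact congrArg SetLike.coe
            (innerDual_innerDual (Submodule.closure (PointedCone.hull ℝ s)))
  · rw [← innerDual_closure_hull s]
    exact innerDual_le_innerDual h

end ProperCone

lemma invFeas_eq_innerDual {n : ℕ} (xh : EuclideanSpace ℝ (Fin n))
    (S : Set (EuclideanSpace ℝ (Fin n))) :
    invFeas xh S = ProperCone.innerDual ((· - xh) '' S) := by
  ext c
  simp [invFeas, real_inner_comm c, inner_sub_right]

/-- Corollary 1, precise form: for `G ⊆ X`, `G` is a forward-feasible generator set
iff every point of `X` lies in the closed cone generated by `G` from `x̂`. -/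
theorem forwardFeasible_generatorSet_iff_subset_closure_cone {n : ℕ}
    (xh : EuclideanSpace ℝ (Fin n)) (X G : Set (EuclideanSpace ℝ (Fin n)))
    (hGX : G ⊆ X) :
    invFeas xh G = invFeas xh X ↔
      ∀ x ∈ X, x - xh ∈ closure (cone ((fun g => g - xh) '' G)) := by
  have hXG : ProperCone.innerDual ((· - xh) '' X) ≤ ProperCone.innerDual ((· - xh) '' G) :=
    ProperCone.innerDual_le_innerDual (Set.image_mono hGX)
  rw [invFeas_eq_innerDual, invFeas_eq_innerDual, SetLike.coe_set_eq,
    le_antisymm_iff, and_iff_left hXG, ProperCone.innerDual_le_innerDual_iff, Set.image_subset_iff]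
  rfl
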